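/- Let A ⊆ ℤ with A ≠ ∅ and Aᶜ ≠ ∅. Then ‖(Mχ_A)''‖₁ ≤ 2 + 2 Σ_{n ∈ ∂S₋Mχ_A} |2χ_A(n) − χ_A(n−1) − χ_A(n+1)|, where ∂S₋Mχ_A = ∂ₗS₋Mχ_A ∪ ∂ᵣS₋Mχ_A and both sides are interpreted in the extended nonnegative reals (the right-hand sum being a tsum over the possibly infinite boundary set). -/

import Mathlib

open Classical

/-- Discrete noncentered average `A_{r,s}f(n) = (1/(r+s+1)) ∑_{j=-r}^{s} |f(n+j)|`. -/
noncomputable def avg (f : ℤ → ℝ) (r s : ℕ) (n : ℤ) : ℝ :=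
  (1 / (r + s + 1 : ℝ)) * ∑ j ∈ Finset.Icc (-(r : ℤ)) (s : ℤ), |f (n + j)|

/-- Discrete noncentered Hardy–Littlewood maximal function `Mf(n) = sup_{r,s∈ℕ} A_{r,s}f(n)`. -/
noncomputable def M (f : ℤ → ℝ) (n : ℤ) : ℝ :=
  ⨆ r : ℕ, ⨆ s : ℕ, avg f r s n

/-- Characteristic function of `A ⊆ ℤ`. -/
noncomputable def chi (A : Set ℤ) (n : ℤ) : ℝ := if n ∈ A then 1 else 0

/-- The set of convex points `S₊f`. -/
def Splus (f : ℤ → ℝ) : Set ℤ := {n : ℤ | 2 * f n ≤ f (n + 1) + f (n - 1)}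

/-- The set of concave points `S₋f`. -/
def Sminus (f : ℤ → ℝ) : Set ℤ := (Splus f)ᶜ

/-- The left boundary `∂ₗS₋f`. -/
def bdl (f : ℤ → ℝ) : Set ℤ := {n : ℤ | n ∈ Sminus f ∧ n - 1 ∈ Splus f}

/-- The right boundary `∂ᵣS₋f`. -/
def bdr (f : ℤ → ℝ) : Set ℤ := {n : ℤ | n ∈ Sminus f ∧ n + 1 ∈ Splus f}


section Aux

open Finset

lemma chi_nonneg (A : Set ℤ) (n : ℤ) : 0 ≤ chi A n := by
  unfold chi; split <;> norm_num

lemma chi_le_one (A : Set ℤ) (n : ℤ) : chi A n ≤ 1 := by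
  unfold chi; split <;> norm_num

lemma abs_chi (A : Set ℤ) (n : ℤ) : |chi A n| = chi A n :=
  abs_of_nonneg (chi_nonneg A n)

lemma avg_chi_eq (A : Set ℤ) (r s : ℕ) (n : ℤ) :
    avg (chi A) r s n = (1 / ((r:ℝ) + s + 1)) * ∑ j ∈ Finset.Icc (-(r:ℤ)) (s:ℤ), chi A (n + j) := by
  unfold avg
  congr 1
  exact Finset.sum_congr rfl fun j _ => abs_chi A _

lemma avg_chi_le_one (A : Set ℤ) (r s : ℕ) (n : ℤ) : avg (chi A) r s n ≤ 1 := by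
  rw [avg_chi_eq]
  have hpos : (0:ℝ) < (r:ℝ) + s + 1 := by positivity
  have hsum : ∑ j ∈ Finset.Icc (-(r:ℤ)) (s:ℤ), chi A (n + j) ≤ ((r:ℝ) + s + 1) := by
    calc ∑ j ∈ Finset.Icc (-(r:ℤ)) (s:ℤ), chi A (n + j)
        ≤ ∑ _j ∈ Finset.Icc (-(r:ℤ)) (s:ℤ), (1:ℝ) :=
          Finset.sum_le_sum fun j _ => chi_le_one A _
      _ = ((Finset.Icc (-(r:ℤ)) (s:ℤ)).card : ℝ) := by simp
      _ = ((r:ℝ) + s + 1) := by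
          rw [Int.card_Icc]
          have h : ((s:ℤ) + 1 - -(r:ℤ)).toNat = r + s + 1 := by omega
          rw [h]; push_cast; ring
  rw [one_div]
  calc ((r:ℝ) + s + 1)⁻¹ * ∑ j ∈ Finset.Icc (-(r:ℤ)) (s:ℤ), chi A (n + j)
      ≤ ((r:ℝ) + s + 1)⁻¹ * ((r:ℝ) + s + 1) :=
        mul_le_mul_of_nonneg_left hsum (by positivity)
    _ = 1 := inv_mul_cancel₀ hpos.ne'

lemma avg_le_M (A : Set ℤ) (r s : ℕ) (n : ℤ) : avg (chi A) r s n ≤ M (chi A) n := by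
  have h1 : avg (chi A) r s n ≤ ⨆ t : ℕ, avg (chi A) r t n :=
    le_ciSup (f := fun t : ℕ => avg (chi A) r t n)
      ⟨1, by rintro x ⟨t, rfl⟩; exact avg_chi_le_one A r t n⟩ s
  have h2 : (⨆ t : ℕ, avg (chi A) r t n) ≤ M (chi A) n :=
    le_ciSup (f := fun u : ℕ => ⨆ t : ℕ, avg (chi A) u t n)
      ⟨1, by rintro x ⟨u, rfl⟩; exact ciSup_le fun t => avg_chi_le_one A u t n⟩ r
  exact h1.trans h2

lemma M_le_one (A : Set ℤ) (n : ℤ) : M (chi A) n ≤ 1 :=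
  ciSup_le fun r => ciSup_le fun s => avg_chi_le_one A r s n

lemma avg_zero_zero (A : Set ℤ) (n : ℤ) : avg (chi A) 0 0 n = chi A n := by
  rw [avg_chi_eq]
  norm_num

lemma chi_le_M (A : Set ℤ) (n : ℤ) : chi A n ≤ M (chi A) n := by
  have h := avg_le_M A 0 0 n; rwa [avg_zero_zero] at h

lemma M_nonneg (A : Set ℤ) (n : ℤ) : 0 ≤ M (chi A) n :=
  (chi_nonneg A n).trans (chi_le_M A n)

lemma M_eq_one (A : Set ℤ) {n : ℤ} (h : n ∈ A) : M (chi A) n = 1 := by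
  refine le_antisymm (M_le_one A n) ?_
  have h2 := chi_le_M A n
  rwa [chi, if_pos h] at h2

lemma sum_shift (F : ℤ → ℝ) (a b c n : ℤ) :
    ∑ j ∈ Finset.Icc (a + c) (b + c), F (n + j) = ∑ j ∈ Finset.Icc a b, F (n + c + j) := by
  rw [← Finset.map_add_right_Icc, Finset.sum_map]
  refine Finset.sum_congr rfl fun j _ => ?_
  rw [addRightEmbedding_apply, show n + (j + c) = n + c + j by ring]

lemma avg_shift (f : ℤ → ℝ) (r s : ℕ) (n : ℤ) :
    avg f r (s + 1) n = avg f (r + 1) s (n + 1) := by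
  unfold avg
  have hsum := sum_shift (fun x => |f x|) (-(r:ℤ) - 1) (s:ℤ) 1 n
  rw [show (-(r:ℤ) - 1 + 1) = -(r:ℤ) by ring] at hsum
  push_cast
  rw [show (-((r:ℤ) + 1) : ℤ) = -(r:ℤ) - 1 by ring, ← hsum]
  ring

lemma Icc_split_left (a b : ℤ) (h : a ≤ b) (F : ℤ → ℝ) :
    ∑ j ∈ Finset.Icc a b, F j = F a + ∑ j ∈ Finset.Icc (a + 1) b, F j := by
  rw [show Finset.Icc a b = insert a (Finset.Icc (a + 1) b) by
        ext x; simp only [Finset.mem_Icc, Finset.mem_insert]; omega,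
      Finset.sum_insert (by simp only [Finset.mem_Icc]; omega)]

lemma Icc_split_right (a b : ℤ) (h : a ≤ b) (F : ℤ → ℝ) :
    ∑ j ∈ Finset.Icc a b, F j = (∑ j ∈ Finset.Icc a (b - 1), F j) + F b := by
  rw [show Finset.Icc a b = insert b (Finset.Icc a (b - 1)) by
        ext x; simp only [Finset.mem_Icc, Finset.mem_insert]; omega,
      Finset.sum_insert (by simp only [Finset.mem_Icc]; omega)]
  ring

lemma arith3 (x C : ℝ) (hx : 0 ≤ x) (hC : 0 ≤ C) :
    2 * ((1 / (x + 2)) * C) ≤ (1 / (x + 1)) * C + (1 / (x + 3)) * C := by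
  have h1 : (0:ℝ) < x + 1 := by linarith
  have h2 : (0:ℝ) < x + 2 := by linarith
  have h3 : (0:ℝ) < x + 3 := by linarith
  have heq : (1 / (x + 1)) * C + (1 / (x + 3)) * C - 2 * ((1 / (x + 2)) * C)
      = (C * 2) / ((x + 1) * ((x + 2) * (x + 3))) := by
    field_simp
    ring
  have hnn : 0 ≤ (C * 2) / ((x + 1) * ((x + 2) * (x + 3))) := by positivity
  linarith

lemma M_convex_outside (A : Set ℤ) (n : ℤ) (hn : n ∉ A) :
    2 * M (chi A) n ≤ M (chi A) (n - 1) + M (chi A) (n + 1) := by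
  have hchin : chi A n = 0 := by simp [chi, hn]
  have hkey : ∀ r s : ℕ, 2 * avg (chi A) r s n ≤ M (chi A) (n - 1) + M (chi A) (n + 1) := by
    intro r s
    match r, s with
    | 0, 0 =>
      rw [avg_zero_zero, hchin]
      have h1 := M_nonneg A (n - 1); have h2 := M_nonneg A (n + 1); linarith
    | 0, (s + 1) =>
      have hCnn : (0:ℝ) ≤ ∑ j ∈ Finset.Icc (1:ℤ) ((s:ℤ) + 1), chi A (n + j) :=
        Finset.sum_nonneg fun j _ => chi_nonneg A _
      have havg : avg (chi A) 0 (s + 1) n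
          = (1 / ((s:ℝ) + 2)) * ∑ j ∈ Finset.Icc (1:ℤ) ((s:ℤ) + 1), chi A (n + j) := by
        rw [avg_chi_eq]
        have hsum1 : ∑ j ∈ Finset.Icc (-((0:ℕ):ℤ)) (((s+1:ℕ)):ℤ), chi A (n + j)
            = ∑ j ∈ Finset.Icc (1:ℤ) ((s:ℤ) + 1), chi A (n + j) := by
          rw [show (-((0:ℕ):ℤ)) = 0 by norm_num, show (((s+1:ℕ)):ℤ) = (s:ℤ) + 1 by push_cast; ring]
          rw [Icc_split_left 0 ((s:ℤ) + 1) (by omega) (fun j => chi A (n + j))]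
          rw [show ((0:ℤ) + 1) = 1 by norm_num, add_zero, hchin, zero_add]
        have hco : (1:ℝ) / (((0:ℕ):ℝ) + ((s+1:ℕ):ℝ) + 1) = 1 / ((s:ℝ) + 2) := by
          congr 1
          push_cast; ring
        rw [hsum1, hco]
      have h1 : (1 / ((s:ℝ) + 1)) * (∑ j ∈ Finset.Icc (1:ℤ) ((s:ℤ) + 1), chi A (n + j))
          ≤ M (chi A) (n + 1) := by
        have hs := sum_shift (fun x => chi A x) 0 (s:ℤ) 1 n
        rw [show ((0:ℤ) + 1) = 1 by norm_num] at hs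
        have he : avg (chi A) 0 s (n + 1)
            = (1 / ((s:ℝ) + 1)) * ∑ j ∈ Finset.Icc (1:ℤ) ((s:ℤ) + 1), chi A (n + j) := by
          rw [avg_chi_eq]
          have hsum1 : ∑ j ∈ Finset.Icc (-((0:ℕ):ℤ)) ((s:ℕ):ℤ), chi A (n + 1 + j)
              = ∑ j ∈ Finset.Icc (1:ℤ) ((s:ℤ) + 1), chi A (n + j) := by
            rw [show (-((0:ℕ):ℤ)) = 0 by norm_num, hs]
          have hco : (1:ℝ) / (((0:ℕ):ℝ) + ((s:ℕ):ℝ) + 1) = 1 / ((s:ℝ) + 1) := by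
            congr 1
            push_cast; ring
          rw [hsum1, hco]
        have h := avg_le_M A 0 s (n + 1)
        rwa [he] at h
      have h2 : (1 / ((s:ℝ) + 3)) * (∑ j ∈ Finset.Icc (1:ℤ) ((s:ℤ) + 1), chi A (n + j))
          ≤ M (chi A) (n - 1) := by
        have hs := sum_shift (fun x => chi A x) (-1) ((s:ℤ) + 1) 1 (n - 1)
        rw [show ((-1:ℤ) + 1) = 0 by norm_num, show ((s:ℤ) + 1 + 1) = (s:ℤ) + 2 by ring,
          show (n - 1 + 1 : ℤ) = n by ring] at hs
        have he : avg (chi A) 0 (s + 2) (n - 1)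
            = (1 / ((s:ℝ) + 3)) * ∑ j ∈ Finset.Icc (-1:ℤ) ((s:ℤ) + 1), chi A (n + j) := by
          rw [avg_chi_eq]
          have hsum1 : ∑ j ∈ Finset.Icc (-((0:ℕ):ℤ)) (((s+2:ℕ)):ℤ), chi A (n - 1 + j)
              = ∑ j ∈ Finset.Icc (-1:ℤ) ((s:ℤ) + 1), chi A (n + j) := by
            rw [show (-((0:ℕ):ℤ)) = 0 by norm_num, show (((s+2:ℕ)):ℤ) = (s:ℤ) + 2 by push_cast; ring]
            rw [hs]
          have hco : (1:ℝ) / (((0:ℕ):ℝ) + ((s+2:ℕ):ℝ) + 1) = 1 / ((s:ℝ) + 3) := by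
            congr 1
            push_cast; ring
          rw [hsum1, hco]
        have hmono : (∑ j ∈ Finset.Icc (1:ℤ) ((s:ℤ) + 1), chi A (n + j))
            ≤ ∑ j ∈ Finset.Icc (-1:ℤ) ((s:ℤ) + 1), chi A (n + j) := by
          apply Finset.sum_le_sum_of_subset_of_nonneg
          · intro x hx; simp only [Finset.mem_Icc] at hx ⊢; omega
          · intro j _ _; exact chi_nonneg A _
        have h := avg_le_M A 0 (s + 2) (n - 1)
        rw [he] at h
        calc (1 / ((s:ℝ) + 3)) * (∑ j ∈ Finset.Icc (1:ℤ) ((s:ℤ) + 1), chi A (n + j))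
            ≤ (1 / ((s:ℝ) + 3)) * (∑ j ∈ Finset.Icc (-1:ℤ) ((s:ℤ) + 1), chi A (n + j)) :=
              mul_le_mul_of_nonneg_left hmono (by positivity)
          _ ≤ M (chi A) (n - 1) := h
      have harith := arith3 (s:ℝ) _ (Nat.cast_nonneg s) hCnn
      rw [havg]
      linarith
    | (r + 1), 0 =>
      have hCnn : (0:ℝ) ≤ ∑ j ∈ Finset.Icc (-(r:ℤ) - 1) (-1:ℤ), chi A (n + j) :=
        Finset.sum_nonneg fun j _ => chi_nonneg A _
      have havg : avg (chi A) (r + 1) 0 n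
          = (1 / ((r:ℝ) + 2)) * ∑ j ∈ Finset.Icc (-(r:ℤ) - 1) (-1:ℤ), chi A (n + j) := by
        rw [avg_chi_eq]
        have hsum1 : ∑ j ∈ Finset.Icc (-((r+1:ℕ):ℤ)) (((0:ℕ)):ℤ), chi A (n + j)
            = ∑ j ∈ Finset.Icc (-(r:ℤ) - 1) (-1:ℤ), chi A (n + j) := by
          rw [show (-((r+1:ℕ):ℤ)) = -(r:ℤ) - 1 by push_cast; ring,
            show (((0:ℕ)):ℤ) = 0 by norm_num]
          rw [Icc_split_right (-(r:ℤ) - 1) 0 (by omega) (fun j => chi A (n + j))]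
          rw [show ((0:ℤ) - 1) = (-1:ℤ) by norm_num, add_zero, hchin, add_zero]
        have hco : (1:ℝ) / (((r+1:ℕ):ℝ) + ((0:ℕ):ℝ) + 1) = 1 / ((r:ℝ) + 2) := by
          congr 1
          push_cast; ring
        rw [hsum1, hco]
      have h1 : (1 / ((r:ℝ) + 1)) * (∑ j ∈ Finset.Icc (-(r:ℤ) - 1) (-1:ℤ), chi A (n + j))
          ≤ M (chi A) (n - 1) := by
        have hs := sum_shift (fun x => chi A x) (-(r:ℤ) - 1) (-1) 1 (n - 1)
        rw [show (-(r:ℤ) - 1 + 1) = -(r:ℤ) by ring, show ((-1:ℤ) + 1) = 0 by norm_num,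
          show (n - 1 + 1 : ℤ) = n by ring] at hs
        have he : avg (chi A) r 0 (n - 1)
            = (1 / ((r:ℝ) + 1)) * ∑ j ∈ Finset.Icc (-(r:ℤ) - 1) (-1:ℤ), chi A (n + j) := by
          rw [avg_chi_eq]
          have hsum1 : ∑ j ∈ Finset.Icc (-((r:ℕ):ℤ)) (((0:ℕ)):ℤ), chi A (n - 1 + j)
              = ∑ j ∈ Finset.Icc (-(r:ℤ) - 1) (-1:ℤ), chi A (n + j) := by
            rw [show (((0:ℕ)):ℤ) = 0 by norm_num, hs]
          have hco : (1:ℝ) / (((r:ℕ):ℝ) + ((0:ℕ):ℝ) + 1) = 1 / ((r:ℝ) + 1) := by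
            congr 1
            push_cast; ring
          rw [hsum1, hco]
        have h := avg_le_M A r 0 (n - 1)
        rwa [he] at h
      have h2 : (1 / ((r:ℝ) + 3)) * (∑ j ∈ Finset.Icc (-(r:ℤ) - 1) (-1:ℤ), chi A (n + j))
          ≤ M (chi A) (n + 1) := by
        have hs := sum_shift (fun x => chi A x) (-(r:ℤ) - 2) 0 1 n
        rw [show (-(r:ℤ) - 2 + 1) = -(r:ℤ) - 1 by ring, show ((0:ℤ) + 1) = 1 by norm_num] at hs
        have he : avg (chi A) (r + 2) 0 (n + 1)
            = (1 / ((r:ℝ) + 3)) * ∑ j ∈ Finset.Icc (-(r:ℤ) - 1) (1:ℤ), chi A (n + j) := by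
          rw [avg_chi_eq]
          have hsum1 : ∑ j ∈ Finset.Icc (-((r+2:ℕ):ℤ)) (((0:ℕ)):ℤ), chi A (n + 1 + j)
              = ∑ j ∈ Finset.Icc (-(r:ℤ) - 1) (1:ℤ), chi A (n + j) := by
            rw [show (-((r+2:ℕ):ℤ)) = -(r:ℤ) - 2 by push_cast; ring,
              show (((0:ℕ)):ℤ) = 0 by norm_num, hs]
          have hco : (1:ℝ) / (((r+2:ℕ):ℝ) + ((0:ℕ):ℝ) + 1) = 1 / ((r:ℝ) + 3) := by
            congr 1
            push_cast; ring
          rw [hsum1, hco]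
        have hmono : (∑ j ∈ Finset.Icc (-(r:ℤ) - 1) (-1:ℤ), chi A (n + j))
            ≤ ∑ j ∈ Finset.Icc (-(r:ℤ) - 1) (1:ℤ), chi A (n + j) := by
          apply Finset.sum_le_sum_of_subset_of_nonneg
          · intro x hx; simp only [Finset.mem_Icc] at hx ⊢; omega
          · intro j _ _; exact chi_nonneg A _
        have h := avg_le_M A (r + 2) 0 (n + 1)
        rw [he] at h
        calc (1 / ((r:ℝ) + 3)) * (∑ j ∈ Finset.Icc (-(r:ℤ) - 1) (-1:ℤ), chi A (n + j))
            ≤ (1 / ((r:ℝ) + 3)) * (∑ j ∈ Finset.Icc (-(r:ℤ) - 1) (1:ℤ), chi A (n + j)) :=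
              mul_le_mul_of_nonneg_left hmono (by positivity)
          _ ≤ M (chi A) (n + 1) := h
      have harith := arith3 (r:ℝ) _ (Nat.cast_nonneg r) hCnn
      rw [havg]
      linarith
    | (r + 1), (s + 1) =>
      have h1 : avg (chi A) (r + 1) (s + 1) n ≤ M (chi A) (n + 1) := by
        rw [avg_shift]; exact avg_le_M A (r + 2) s (n + 1)
      have h2 : avg (chi A) (r + 1) (s + 1) n ≤ M (chi A) (n - 1) := by
        have h := avg_shift (chi A) r (s + 1) (n - 1)
        rw [show (n - 1 + 1 : ℤ) = n by ring] at h
        rw [← h]; exact avg_le_M A r (s + 2) (n - 1)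
      linarith
  have hM : M (chi A) n ≤ (M (chi A) (n - 1) + M (chi A) (n + 1)) / 2 :=
    ciSup_le fun r => ciSup_le fun s => by linarith [hkey r s]
  linarith

lemma tele (g : ℤ → ℝ) (a : ℤ) :
    ∀ b, a ≤ b → ∑ k ∈ Finset.Icc a b, (g (k + 1) - g k) = g (b + 1) - g a := by
  refine Int.le_induction ?_ ?_
  · simp
  · intro b hb ih
    rw [Icc_split_right a (b + 1) (by omega) (fun k => g (k + 1) - g k),
      show (b + 1 - 1 : ℤ) = b by ring, ih]
    ring
lemma ofReal_abs_eq (x : ℝ) :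
    ENNReal.ofReal |x| = ENNReal.ofReal x + ENNReal.ofReal (-x) := by
  rcases le_total 0 x with h | h
  · rw [abs_of_nonneg h, ENNReal.ofReal_of_nonpos (neg_nonpos.mpr h), add_zero]
  · rw [abs_of_nonpos h, ENNReal.ofReal_of_nonpos h, zero_add]

end Aux

theorem maximal_second_derivative_boundary_sum_bound (A : Set ℤ)
    (hA : A.Nonempty) (hAc : Aᶜ.Nonempty) :
    ∑' n : ℤ, ENNReal.ofReal |M (chi A) (n + 2) - 2 * M (chi A) (n + 1) + M (chi A) n| ≤
      2 + 2 * ∑' m : ↥(bdl (M (chi A)) ∪ bdr (M (chi A))),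
        ENNReal.ofReal |2 * chi A (m : ℤ) - chi A ((m : ℤ) - 1) - chi A ((m : ℤ) + 1)| := by
  classical
  set f : ℤ → ℝ := M (chi A) with hf
  set U : Set ℤ := bdl f ∪ bdr f with hU
  set T : ℤ → ℝ := fun n => f (n + 2) - 2 * f (n + 1) + f n with hT
  set p : ℤ → ℝ := fun m => 2 * f m - f (m - 1) - f (m + 1) with hp
  set B : ENNReal := ∑' m : ↥U,
      ENNReal.ofReal |2 * chi A (m : ℤ) - chi A ((m : ℤ) - 1) - chi A ((m : ℤ) + 1)| with hB
  have hf1 : ∀ m : ℤ, f m ≤ 1 := M_le_one A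
  have hfchi : ∀ m : ℤ, chi A m ≤ f m := chi_le_M A
  have hf0 : ∀ m : ℤ, 0 ≤ f m := M_nonneg A
  -- S₋ ⊆ A
  have hSA : ∀ m : ℤ, m ∈ Sminus f → m ∈ A := by
    intro m hm
    by_contra hmA
    refine hm ?_
    have h := M_convex_outside A m hmA
    simp only [Splus, Set.mem_setOf_eq]
    rw [← hf] at h
    linarith
  have hfA : ∀ m : ℤ, m ∈ A → f m = 1 := fun m hm => M_eq_one A hm
  -- m ∉ U → p m ≤ 0
  have hpU : ∀ m : ℤ, m ∉ U → p m ≤ 0 := by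
    intro m hm
    by_cases hms : m ∈ Splus f
    · simp only [Splus, Set.mem_setOf_eq] at hms
      simp only [hp]; linarith
    · have hmS : m ∈ Sminus f := hms
      have hl : m - 1 ∉ Splus f := fun h => hm (Or.inl ⟨hmS, h⟩)
      have hr : m + 1 ∉ Splus f := fun h => hm (Or.inr ⟨hmS, h⟩)
      have e1 : f (m - 1) = 1 := hfA _ (hSA _ hl)
      have e2 : f (m + 1) = 1 := hfA _ (hSA _ hr)
      simp only [hp]
      rw [e1, e2]
      linarith [hf1 m]
  -- pointwise bound
  have hpB : ∀ m : ℤ, ENNReal.ofReal (p m)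
      ≤ ENNReal.ofReal |2 * chi A m - chi A (m - 1) - chi A (m + 1)| := by
    intro m
    by_cases hms : m ∈ Splus f
    · simp only [Splus, Set.mem_setOf_eq] at hms
      have : p m ≤ 0 := by simp only [hp]; linarith
      rw [ENNReal.ofReal_of_nonpos this]
      exact zero_le
    · have hmA : m ∈ A := hSA m hms
      have hchim : chi A m = 1 := by simp [chi, hmA]
      have habs : |2 * chi A m - chi A (m - 1) - chi A (m + 1)|
          = 2 - chi A (m - 1) - chi A (m + 1) := by
        rw [hchim, abs_of_nonneg (by linarith [chi_le_one A (m - 1), chi_le_one A (m + 1)])]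
        ring
      rw [habs]
      apply ENNReal.ofReal_le_ofReal
      simp only [hp]
      linarith [hfchi (m - 1), hfchi (m + 1), hf1 m]
  -- |g| ≤ 1
  have hg : ∀ k : ℤ, |f (k + 1) - f k| ≤ 1 := fun k =>
    abs_le.mpr ⟨by linarith [hf0 (k + 1), hf1 k], by linarith [hf1 (k + 1), hf0 k]⟩
  have habs : ∀ x : ℝ, ENNReal.ofReal |x| = ENNReal.ofReal x + ENNReal.ofReal (-x) :=
    ofReal_abs_eq
  -- Q = tsum of p
  have hQshift : (∑' n : ℤ, ENNReal.ofReal (-T n)) = ∑' m : ℤ, ENNReal.ofReal (p m) := by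
    rw [← (Equiv.subRight (1:ℤ)).tsum_eq (fun n => ENNReal.ofReal (-T n))]
    refine tsum_congr fun m => ?_
    simp only [Equiv.subRight_apply, hT, hp]
    congr 1
    rw [show (m - 1 + 2 : ℤ) = m + 1 by ring, show (m - 1 + 1 : ℤ) = m by ring]
    ring
  have hQU : (∑' m : ℤ, ENNReal.ofReal (p m)) = ∑' m : ↥U, ENNReal.ofReal (p (m : ℤ)) := by
    refine (tsum_subtype_eq_of_support_subset ?_).symm
    intro m hm
    by_contra hmU
    have h0 := hpU m hmU
    exact hm (ENNReal.ofReal_of_nonpos h0)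
  have hQB : (∑' m : ↥U, ENNReal.ofReal (p (m : ℤ))) ≤ B := by
    rw [hB]
    exact ENNReal.tsum_le_tsum fun m => hpB (m : ℤ)
  have hQle : (∑' n : ℤ, ENNReal.ofReal (-T n)) ≤ B := by
    rw [hQshift, hQU]; exact hQB
  -- P ≤ 2 + Q
  have hP : (∑' n : ℤ, ENNReal.ofReal (T n)) ≤ 2 + ∑' n : ℤ, ENNReal.ofReal (-T n) := by
    rw [ENNReal.tsum_eq_iSup_sum]
    refine iSup_le fun F => ?_
    rcases F.eq_empty_or_nonempty with rfl | hne
    · simp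
    set a := F.min' hne with ha
    set b := F.max' hne with hb2
    have hab : a ≤ b := F.min'_le _ (F.max'_mem hne)
    have hsub : F ⊆ Finset.Icc a b := fun x hx =>
      Finset.mem_Icc.mpr ⟨F.min'_le x hx, F.le_max' x hx⟩
    have step1 : ∑ n ∈ F, ENNReal.ofReal (T n) ≤ ∑ n ∈ Finset.Icc a b, ENNReal.ofReal (T n) :=
      Finset.sum_le_sum_of_subset hsub
    have step2 : ∑ n ∈ Finset.Icc a b, ENNReal.ofReal (T n)
        = ENNReal.ofReal (∑ n ∈ Finset.Icc a b, max (T n) 0) := by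
      rw [ENNReal.ofReal_sum_of_nonneg (fun n _ => le_max_right _ _)]
      refine Finset.sum_congr rfl fun n _ => ?_
      rcases le_total 0 (T n) with h | h
      · rw [max_eq_left h]
      · rw [max_eq_right h, ENNReal.ofReal_of_nonpos h, ENNReal.ofReal_zero]
    have hreal : ∑ n ∈ Finset.Icc a b, max (T n) 0
        ≤ 2 + ∑ n ∈ Finset.Icc a b, max (-T n) 0 := by
      have hdiff : ∑ n ∈ Finset.Icc a b, max (T n) 0 - ∑ n ∈ Finset.Icc a b, max (-T n) 0
          = ∑ n ∈ Finset.Icc a b, T n := by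
        rw [← Finset.sum_sub_distrib]
        refine Finset.sum_congr rfl fun n _ => ?_
        rcases le_total 0 (T n) with h | h
        · rw [max_eq_left h, max_eq_right (by linarith)]; ring
        · rw [max_eq_right h, max_eq_left (by linarith)]; ring
      have htel : ∑ n ∈ Finset.Icc a b, T n
          = (f (b + 1 + 1) - f (b + 1)) - (f (a + 1) - f a) := by
        have h := tele (fun k => f (k + 1) - f k) a b hab
        rw [← h]
        refine Finset.sum_congr rfl fun n _ => ?_
        simp only [hT]
        rw [show (n + 1 + 1 : ℤ) = n + 2 by ring]
        ring
      have h1 := hg (b + 1)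
      have h2 := hg a
      rw [abs_le] at h1 h2
      have := hdiff
      rw [htel] at this
      linarith [h1.1, h1.2, h2.1, h2.2]
    have step3 : ENNReal.ofReal (∑ n ∈ Finset.Icc a b, max (T n) 0)
        ≤ 2 + ∑ n ∈ Finset.Icc a b, ENNReal.ofReal (-T n) := by
      calc ENNReal.ofReal (∑ n ∈ Finset.Icc a b, max (T n) 0)
          ≤ ENNReal.ofReal (2 + ∑ n ∈ Finset.Icc a b, max (-T n) 0) :=
            ENNReal.ofReal_le_ofReal hreal
        _ = ENNReal.ofReal 2 + ENNReal.ofReal (∑ n ∈ Finset.Icc a b, max (-T n) 0) :=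
            ENNReal.ofReal_add (by norm_num)
              (Finset.sum_nonneg fun n _ => le_max_right _ _)
        _ = 2 + ∑ n ∈ Finset.Icc a b, ENNReal.ofReal (max (-T n) 0) := by
            rw [ENNReal.ofReal_sum_of_nonneg (fun n _ => le_max_right _ _)]
            norm_num
        _ = 2 + ∑ n ∈ Finset.Icc a b, ENNReal.ofReal (-T n) := by
            congr 1
            refine Finset.sum_congr rfl fun n _ => ?_
            rcases le_total 0 (-T n) with h | h
            · rw [max_eq_left h]
            · rw [max_eq_right h, ENNReal.ofReal_of_nonpos h, ENNReal.ofReal_zero]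
    calc ∑ n ∈ F, ENNReal.ofReal (T n)
        ≤ ∑ n ∈ Finset.Icc a b, ENNReal.ofReal (T n) := step1
      _ = ENNReal.ofReal (∑ n ∈ Finset.Icc a b, max (T n) 0) := step2
      _ ≤ 2 + ∑ n ∈ Finset.Icc a b, ENNReal.ofReal (-T n) := step3
      _ ≤ 2 + ∑' n : ℤ, ENNReal.ofReal (-T n) := by
          gcongr
          exact ENNReal.sum_le_tsum _
  -- assemble
  calc ∑' n : ℤ, ENNReal.ofReal |f (n + 2) - 2 * f (n + 1) + f n|
      = (∑' n : ℤ, ENNReal.ofReal (T n)) + ∑' n : ℤ, ENNReal.ofReal (-T n) := by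
        rw [← ENNReal.tsum_add]
        exact tsum_congr fun n => habs _
    _ ≤ (2 + ∑' n : ℤ, ENNReal.ofReal (-T n)) + ∑' n : ℤ, ENNReal.ofReal (-T n) :=
        add_le_add_left hP _
    _ ≤ (2 + B) + B := add_le_add (add_le_add_right hQle 2) hQle
    _ = 2 + 2 * B := by ring
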